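/- arXiv:1409.3249 — 2 statements merged into one kernel-verified Lean document; each statement's English description precedes it below -/
import Mathlib

section
/- Let a₀ > 0, c ≥ 0, and 0 < λ₂ ≤ λ_N be real numbers, define α₀²(λ, g) := (a₀ − λg)² + 2cλg², χ := max(λ_N, λ₂ + 2c), and g* := 2a₀/(χ + λ₂ + 2c). Then for every real number g, max(α₀²(λ₂, g), α₀²(λ_N, g)) ≥ max(α₀²(λ₂, g*), α₀²(λ_N, g*)). -/
/-!
Write `f λ g = (a₀ - λ g)² + 2cλg²`, a parabola in `g` with vertex `a₀ / (λ + 2c)`, and note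
`f λ g - f μ g = (λ - μ) g ((λ + μ + 2c) g - 2a₀)`. If `λ_N ≥ λ₂ + 2c`, the two parabolas cross
at `g*`, which lies left of the vertex of `f λ₂` and right of the vertex of `f λ_N`: moving `g`
left of `g*` increases `f λ₂`, moving it right increases `f λ_N`. Otherwise `g*` is the vertex of
`f λ₂`, and `f λ_N g* ≤ f λ₂ g*`.
-/

def marginSq (a₀ c lam g : ℝ) : ℝ := (a₀ - lam * g) ^ 2 + 2 * c * lam * g ^ 2

section marginSq

variable {a₀ c lam μ g h : ℝ}

theorem marginSq_sub_marginSq_left :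
    marginSq a₀ c lam g - marginSq a₀ c μ g =
      (lam - μ) * g * ((lam + μ + 2 * c) * g - 2 * a₀) := by
  unfold marginSq; ring

theorem marginSq_sub_marginSq_right :
    marginSq a₀ c lam g - marginSq a₀ c lam h =
      lam * ((lam + 2 * c) * (g - h) ^ 2 + 2 * (g - h) * ((lam + 2 * c) * h - a₀)) := by
  unfold marginSq; ring

/-- `f λ h ≤ f λ g` whenever `g` lies on the far side of `h` from the vertex `a₀ / (λ + 2c)`. -/
theorem marginSq_le_of_mul_nonneg (hlam : 0 ≤ lam) (hc : 0 ≤ c)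
    (hgh : 0 ≤ (g - h) * ((lam + 2 * c) * h - a₀)) :
    marginSq a₀ c lam h ≤ marginSq a₀ c lam g := by
  have hsub := marginSq_sub_marginSq_right (a₀ := a₀) (c := c) (lam := lam) (g := g) (h := h)
  have : 0 ≤ (lam + 2 * c) * (g - h) ^ 2 := mul_nonneg (by linarith) (sq_nonneg _)
  nlinarith [mul_nonneg hlam (add_nonneg this (mul_nonneg zero_le_two hgh))]

theorem marginSq_eq_of_add_mul_eq (h : (lam + μ + 2 * c) * g = 2 * a₀) :
    marginSq a₀ c lam g = marginSq a₀ c μ g := by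
  have := marginSq_sub_marginSq_left (a₀ := a₀) (c := c) (lam := lam) (μ := μ) (g := g)
  rw [h, sub_self, mul_zero] at this
  linarith

theorem marginSq_le_of_add_mul_le (hlam : lam ≤ μ) (hg : 0 ≤ g)
    (h : (lam + μ + 2 * c) * g ≤ 2 * a₀) :
    marginSq a₀ c μ g ≤ marginSq a₀ c lam g := by
  have := marginSq_sub_marginSq_left (a₀ := a₀) (c := c) (lam := μ) (μ := lam) (g := g)
  nlinarith [mul_nonneg (mul_nonneg (sub_nonneg.2 hlam) hg) (sub_nonneg.2 h)]

end marginSq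

theorem stmt_12 (a₀ c lam₂ lamN : ℝ) (ha : 0 < a₀) (hc : 0 ≤ c) (h2 : 0 < lam₂)
    (hN : lam₂ ≤ lamN)
    (α : ℝ → ℝ → ℝ) (hα : ∀ lam g : ℝ, α lam g = (a₀ - lam * g) ^ 2 + 2 * c * lam * g ^ 2)
    (χ gstar : ℝ) (hχ : χ = max lamN (lam₂ + 2 * c))
    (hgstar : gstar = 2 * a₀ / (χ + lam₂ + 2 * c)) :
    ∀ g : ℝ, max (α lam₂ g) (α lamN g) ≥ max (α lam₂ gstar) (α lamN gstar) := by
  intro g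
  obtain rfl : α = marginSq a₀ c := funext₂ hα
  have hpos : 0 < χ + lam₂ + 2 * c := by have := le_max_left lamN (lam₂ + 2 * c); linarith
  have hgstar_mul : gstar * (χ + lam₂ + 2 * c) = 2 * a₀ := by
    rw [hgstar]; field_simp
  have hgstar_pos : 0 < gstar := by rw [hgstar]; positivity
  have hN_le : marginSq a₀ c lamN gstar ≤ marginSq a₀ c lam₂ gstar :=
    marginSq_le_of_add_mul_le hN hgstar_pos.le <| by
      rw [hχ] at hgstar_mul
      nlinarith [le_max_left lamN (lam₂ + 2 * c)]
  rw [ge_iff_le, max_eq_left hN_le]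
  rcases le_total (lam₂ + 2 * c) lamN with hχN | hχ₂
  · rw [hχ, max_eq_left hχN] at hgstar_mul
    rcases le_total g gstar with hg | hg
    · refine le_max_of_le_left (marginSq_le_of_mul_nonneg h2.le hc ?_)
      exact mul_nonneg_of_nonpos_of_nonpos (by linarith) (by nlinarith)
    · rw [marginSq_eq_of_add_mul_eq (by linarith : (lam₂ + lamN + 2 * c) * gstar = 2 * a₀)]
      refine le_max_of_le_right (marginSq_le_of_mul_nonneg (by linarith) hc ?_)
      exact mul_nonneg (by linarith) (by nlinarith)
  · rw [hχ, max_eq_right hχ₂] at hgstar_mul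
    refine le_max_of_le_left (marginSq_le_of_mul_nonneg h2.le hc ?_)
    rw [show (lam₂ + 2 * c) * gstar - a₀ = 0 by linarith, mul_zero]
end

section
/- Let a₀ > 0, c ≥ 0, and 0 < λ₂ ≤ λ_N be real numbers, define α₀²(λ, g) := (a₀ − λg)² + 2cλg², χ := max(λ_N, λ₂ + 2c), and g* := 2a₀/(χ + λ₂ + 2c). Then α₀²(λ₂, g*) ≥ α₀²(λ_N, g*). -/
/-!
Expanding the square, `α₀²(λ, g) - α₀²(μ, g) = (μ - λ) g (2a₀ - (λ + μ + 2c) g)`. At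
`g* = 2a₀ / (χ + λ₂ + 2c)` we have `2a₀ g* = (χ + λ₂ + 2c) g*²`, so for `μ = λ_N` the difference
becomes `(λ_N - λ₂) (χ - λ_N) g*²`, which is nonnegative because `λ₂ ≤ λ_N ≤ χ`.
-/

/-- The quantity `α₀²(λ, g)` of the mean square synchronization condition. -/
def syncExponent (a₀ c lam g : ℝ) : ℝ :=
  (a₀ - lam * g) ^ 2 + 2 * c * lam * g ^ 2

theorem syncExponent_sub_syncExponent (a₀ c lam mu g : ℝ) :
    syncExponent a₀ c lam g - syncExponent a₀ c mu g =
      (mu - lam) * g * (2 * a₀ - (lam + mu + 2 * c) * g) := by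
  unfold syncExponent
  ring

/-- Holds also when `d = 0`, since then `g = 0`. -/
theorem mul_eq_sq_mul_of_eq_div {g x d : ℝ} (hg : g = x / d) : g * x = g ^ 2 * d := by
  rcases eq_or_ne d 0 with rfl | hd
  · simp [hg]
  · rw [hg]
    field_simp

theorem syncExponent_le_of_eq_optimalGain {a₀ c lam mu χ g : ℝ} (hlam : lam ≤ mu)
    (hmu : mu ≤ χ) (hg : g = 2 * a₀ / (χ + lam + 2 * c)) :
    syncExponent a₀ c mu g ≤ syncExponent a₀ c lam g := by
  have hgain := mul_eq_sq_mul_of_eq_div hg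
  have hdiff : syncExponent a₀ c lam g - syncExponent a₀ c mu g =
      (mu - lam) * (χ - mu) * g ^ 2 := by
    rw [syncExponent_sub_syncExponent]
    linear_combination (mu - lam) * hgain
  have : 0 ≤ (mu - lam) * (χ - mu) * g ^ 2 := by
    have := sub_nonneg.2 hlam
    have := sub_nonneg.2 hmu
    positivity
  linarith

theorem stmt_13_general (a₀ c lam₂ lamN : ℝ)
    (hN : lam₂ ≤ lamN)
    (α : ℝ → ℝ → ℝ) (hα : ∀ lam g : ℝ, α lam g = (a₀ - lam * g) ^ 2 + 2 * c * lam * g ^ 2)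
    (χ gstar : ℝ) (hχ : χ = max lamN (lam₂ + 2 * c))
    (hgstar : gstar = 2 * a₀ / (χ + lam₂ + 2 * c)) :
    α lam₂ gstar ≥ α lamN gstar := by
  rw [hα, hα]
  exact syncExponent_le_of_eq_optimalGain hN (hχ ▸ le_max_left _ _) hgstar

theorem stmt_13 (a₀ c lam₂ lamN : ℝ) (ha : 0 < a₀) (hc : 0 ≤ c) (h2 : 0 < lam₂)
    (hN : lam₂ ≤ lamN)
    (α : ℝ → ℝ → ℝ) (hα : ∀ lam g : ℝ, α lam g = (a₀ - lam * g) ^ 2 + 2 * c * lam * g ^ 2)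
    (χ gstar : ℝ) (hχ : χ = max lamN (lam₂ + 2 * c))
    (hgstar : gstar = 2 * a₀ / (χ + lam₂ + 2 * c)) :
    α lam₂ gstar ≥ α lamN gstar :=
  stmt_13_general a₀ c lam₂ lamN hN α hα χ gstar hχ hgstar
end
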